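/- arXiv:1305.5916 — 2 statements merged into one kernel-verified Lean document; each statement's English description precedes it below -/
import Mathlib

section
/- Let ε ∈ (0,2), g : ℕ → ℕ, L > 0, θ : ℤ₊ → ℤ₊ and ψ : (0,∞) → ℤ₊. Set Θ = θ(ψ(ε/3) − 1 + max{⌈ln(3L/ε)⌉, 1}) + 1 and Δ = ε / (3·(Θ − ψ(ε/3) + g(Θ))). Assume: (i) (α_n)_{n≥1} is a sequence in [0,1] with ∑_{k=1}^{θ(n)} α_k ≥ n for all n ≥ 1; (ii) (t_n)_{n≥1} is a sequence of reals with t_n ≤ ε/3 for all n ≥ ψ(ε/3); (iii) (s_n)_{n≥1} is a sequence of reals with 0 ≤ s_n ≤ L for all n ≥ 1, satisfying s_{n+1} ≤ (1 − α_n)·s_n + α_n·t_n + Δ for all n ≥ 1. Then s_n ≤ ε for all n with Θ ≤ n ≤ Θ + g(Θ). -/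
/-!
Unrolling the recursive inequality from `ψ(ε/3)` on gives
`s n ≤ ε/3 + L ∏ (1 - α k) + (n - ψ(ε/3)) Δ`. Since `1 - x ≤ exp (-x)`, the product is at most
`exp (-∑ α k)`, and the divergence modulus `θ` makes this sum at least `⌈ln (3L/ε)⌉` once
`n ≥ Θ`, so the middle term is at most `ε/3`; the choice of `Δ` keeps the accumulated error
at most `ε/3` as long as `n ≤ Θ + g Θ`.
-/

open Finset Real

lemma sum_le_card_of_le_one {ι : Type*} {s : Finset ι} {α : ι → ℝ} (hα : ∀ k ∈ s, α k ≤ 1) :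
    ∑ k ∈ s, α k ≤ #s := by
  simpa using sum_le_card_nsmul s α 1 hα

lemma le_of_le_sum_Icc_one {α : ℕ → ℝ} {m n : ℕ} (hα : ∀ k, 1 ≤ k → α k ≤ 1)
    (h : (n : ℝ) ≤ ∑ k ∈ Icc 1 m, α k) : n ≤ m := by
  have : ∑ k ∈ Icc 1 m, α k ≤ m := by
    simpa using sum_le_card_of_le_one fun k hk ↦ hα k (mem_Icc.mp hk).1
  exact_mod_cast h.trans this

lemma le_sum_Ico_of_le_sum_Icc_one {α : ℕ → ℝ} {m n b N : ℕ}
    (hα : ∀ k, 1 ≤ k → α k ∈ Set.Icc (0 : ℝ) 1) (hm : 1 ≤ m) (hmn : m ≤ n) (hbn : b < n)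
    (hb : ((m - 1 + N : ℕ) : ℝ) ≤ ∑ k ∈ Icc 1 b, α k) :
    (N : ℝ) ≤ ∑ k ∈ Ico m n, α k := by
  have hhead : ∑ k ∈ Ico 1 m, α k ≤ (m - 1 : ℕ) := by
    simpa using sum_le_card_of_le_one fun k hk ↦ (hα k (mem_Ico.mp hk).1).2
  have hmono : ∑ k ∈ Icc 1 b, α k ≤ ∑ k ∈ Ico 1 n, α k :=
    sum_le_sum_of_subset_of_nonneg (Icc_subset_Ico_right hbn)
      fun k hk _ ↦ (hα k (mem_Ico.mp hk).1).1
  have hsplit := sum_Ico_consecutive α hm hmn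
  push_cast at hb
  linarith

lemma prod_one_sub_le_exp_neg_sum {ι : Type*} {s : Finset ι} {α : ι → ℝ}
    (hα : ∀ k ∈ s, α k ≤ 1) : ∏ k ∈ s, (1 - α k) ≤ exp (-∑ k ∈ s, α k) := by
  rw [← sum_neg_distrib, exp_sum]
  exact prod_le_prod (fun k hk ↦ sub_nonneg.mpr (hα k hk)) fun k _ ↦ one_sub_le_exp_neg _

lemma mul_exp_neg_le_of_log_div_le {L c y : ℝ} (hL : 0 < L) (hc : 0 < c)
    (h : log (L / c) ≤ y) : L * exp (-y) ≤ c := by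
  have hexp : L / c ≤ exp y := (log_le_iff_le_exp (by positivity)).mp h
  rw [exp_neg, ← div_eq_mul_inv, div_le_iff₀ (exp_pos y)]
  rwa [div_le_iff₀ hc, mul_comm] at hexp

lemma le_add_mul_prod_add_of_rec_ineq {α t s : ℕ → ℝ} {m : ℕ} {c L Δ : ℝ}
    (hc : 0 ≤ c) (hΔ : 0 ≤ Δ)
    (hα : ∀ n, m ≤ n → α n ∈ Set.Icc (0 : ℝ) 1) (ht : ∀ n, m ≤ n → t n ≤ c) (hsm : s m ≤ L)
    (hrec : ∀ n, m ≤ n → s (n + 1) ≤ (1 - α n) * s n + α n * t n + Δ) :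
    ∀ n, m ≤ n → s n ≤ c + L * ∏ k ∈ Ico m n, (1 - α k) + ((n - m : ℕ) : ℝ) * Δ := by
  intro n hn
  induction n, hn using Nat.le_induction with
  | base => simp only [Ico_self, prod_empty, Nat.sub_self, Nat.cast_zero]; linarith
  | succ n hn ih =>
    obtain ⟨hα0, hα1⟩ := hα n hn
    have hα1' : 0 ≤ 1 - α n := sub_nonneg.mpr hα1
    have hj : (0 : ℝ) ≤ (n - m : ℕ) := Nat.cast_nonneg _
    rw [prod_Ico_succ_top hn, Nat.succ_sub hn, Nat.cast_succ]
    calc s (n + 1) ≤ (1 - α n) * s n + α n * t n + Δ := hrec n hn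
      _ ≤ (1 - α n) * (c + L * ∏ k ∈ Ico m n, (1 - α k) + ((n - m : ℕ) : ℝ) * Δ)
            + α n * c + Δ := by
          gcongr
          exact ht n hn
      _ ≤ _ := by nlinarith [mul_nonneg hα0 (mul_nonneg hj hΔ)]

theorem quantitative_metastability_lemma_general
    (ε : ℝ) (hε0 : 0 < ε)
    (g : ℕ → ℕ) (L : ℝ) (hL : 0 < L)
    (θ : ℕ → ℕ)
    (ψ : ℝ → ℕ) (hψ : ∀ x : ℝ, 0 < x → 1 ≤ ψ x)
    (Θ : ℕ) (hΘ : Θ = θ (ψ (ε / 3) - 1 + max ⌈Real.log (3 * L / ε)⌉₊ 1) + 1)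
    (Δ : ℝ) (hΔ : Δ = ε / (3 * ((Θ - ψ (ε / 3) + g Θ : ℕ) : ℝ)))
    (α t s : ℕ → ℝ)
    (hα : ∀ n, 1 ≤ n → α n ∈ Set.Icc (0 : ℝ) 1)
    (hθdiv : ∀ n : ℕ, 1 ≤ n → (n : ℝ) ≤ ∑ k ∈ Finset.Icc 1 (θ n), α k)
    (ht : ∀ n : ℕ, ψ (ε / 3) ≤ n → t n ≤ ε / 3)
    (hsL : ∀ n, 1 ≤ n → s n ≤ L)
    (hrec : ∀ n, 1 ≤ n → s (n + 1) ≤ (1 - α n) * s n + α n * t n + Δ) :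
    ∀ n : ℕ, Θ ≤ n → n ≤ Θ + g Θ → s n ≤ ε := by
  intro n hΘn hnΘ
  set ψ₀ := ψ (ε / 3)
  set N := max ⌈log (3 * L / ε)⌉₊ 1
  have hψ₀ : 1 ≤ ψ₀ := hψ _ (by positivity)
  have hN : 1 ≤ N := le_max_right _ _
  have hθ := hθdiv (ψ₀ - 1 + N) (by omega)
  have hψ₀Θ : ψ₀ < Θ := by have := le_of_le_sum_Icc_one (fun k hk ↦ (hα k hk).2) hθ; omega
  have hD : (0 : ℝ) < (Θ - ψ₀ + g Θ : ℕ) := by exact_mod_cast (by omega : 0 < Θ - ψ₀ + g Θ)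
  have hΔ0 : 0 ≤ Δ := by rw [hΔ]; positivity
  have hunroll := le_add_mul_prod_add_of_rec_ineq (by positivity) hΔ0
    (fun k hk ↦ hα k (by omega)) ht (hsL ψ₀ hψ₀) (fun k hk ↦ hrec k (by omega)) n (by omega)
  have hsum : (N : ℝ) ≤ ∑ k ∈ Ico ψ₀ n, α k :=
    le_sum_Ico_of_le_sum_Icc_one hα hψ₀ (by omega) (by omega) hθ
  have hlog : log (L / (ε / 3)) ≤ N := by
    rw [show L / (ε / 3) = 3 * L / ε by ring]
    exact (Nat.le_ceil _).trans (by exact_mod_cast le_max_left _ _)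
  have hprod : L * ∏ k ∈ Ico ψ₀ n, (1 - α k) ≤ ε / 3 :=
    calc L * ∏ k ∈ Ico ψ₀ n, (1 - α k) ≤ L * exp (-∑ k ∈ Ico ψ₀ n, α k) := by
          gcongr
          exact prod_one_sub_le_exp_neg_sum fun k hk ↦ (hα k (by grind)).2
      _ ≤ L * exp (-N) := by gcongr
      _ ≤ ε / 3 := mul_exp_neg_le_of_log_div_le hL (by positivity) hlog
  have herror : ((n - ψ₀ : ℕ) : ℝ) * Δ ≤ ε / 3 :=
    calc ((n - ψ₀ : ℕ) : ℝ) * Δ ≤ ((Θ - ψ₀ + g Θ : ℕ) : ℝ) * Δ := by gcongr; omega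
      _ = ε / 3 := by rw [hΔ]; field_simp
  linarith

/-- Quantitative lemma (Lemma 5.2 of Kohlenbach–Leuştean, reformulated):
metastability-type bound for sequences satisfying
`s_{n+1} ≤ (1 - α_n) s_n + α_n t_n + Δ`. -/
theorem quantitative_metastability_lemma
    (ε : ℝ) (hε0 : 0 < ε) (hε2 : ε < 2)
    (g : ℕ → ℕ) (L : ℝ) (hL : 0 < L)
    (θ : ℕ → ℕ) (hθ : ∀ n : ℕ, 1 ≤ n → 1 ≤ θ n)
    (ψ : ℝ → ℕ) (hψ : ∀ x : ℝ, 0 < x → 1 ≤ ψ x)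
    (Θ : ℕ) (hΘ : Θ = θ (ψ (ε / 3) - 1 + max ⌈Real.log (3 * L / ε)⌉₊ 1) + 1)
    (Δ : ℝ) (hΔ : Δ = ε / (3 * ((Θ - ψ (ε / 3) + g Θ : ℕ) : ℝ)))
    (α t s : ℕ → ℝ)
    (hα : ∀ n, 1 ≤ n → α n ∈ Set.Icc (0 : ℝ) 1)
    (hθdiv : ∀ n : ℕ, 1 ≤ n → (n : ℝ) ≤ ∑ k ∈ Finset.Icc 1 (θ n), α k)
    (ht : ∀ n : ℕ, ψ (ε / 3) ≤ n → t n ≤ ε / 3)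
    (hs0 : ∀ n, 1 ≤ n → 0 ≤ s n) (hsL : ∀ n, 1 ≤ n → s n ≤ L)
    (hrec : ∀ n, 1 ≤ n → s (n + 1) ≤ (1 - α n) * s n + α n * t n + Δ) :
    ∀ n : ℕ, Θ ≤ n → n ≤ Θ + g Θ → s n ≤ ε :=
  quantitative_metastability_lemma_general ε hε0 g L hL θ ψ hψ Θ hΘ Δ hΔ α t s hα hθdiv ht hsL hrec
end

section
/- For all real a, b with 0 ≤ a ≤ π and 0 ≤ b ≤ π, one has sin²((a+b)/2) ≤ sin²(a/2) + sin²(b/2) + (1/2)·sin(a). -/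
/-! With `sin² (t/2) = (1 - cos t)/2` and the addition formula for `cos (a + b)`, the right-hand side
minus the left-hand side equals `((1 - cos a)(1 - cos b) + sin a (1 - sin b)) / 2`, which is
nonnegative as soon as `sin a ≥ 0`. -/

open Real

theorem sin_sq_half (x : ℝ) : sin (x / 2) ^ 2 = (1 - cos x) / 2 := by
  rw [sin_sq_eq_half_sub, mul_div_cancel₀ x two_ne_zero]
  ring

theorem sin_sq_half_add_sin_sq_half_sub_sin_sq_half_add (a b : ℝ) :
    sin (a / 2) ^ 2 + sin (b / 2) ^ 2 - sin ((a + b) / 2) ^ 2 =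
      ((1 - cos a) * (1 - cos b) - sin a * sin b) / 2 := by
  rw [sin_sq_half, sin_sq_half, sin_sq_half, cos_add]
  ring

theorem sin_sq_add_div_two_le_general
    (a b : ℝ) (ha0 : 0 ≤ a) (haπ : a ≤ Real.pi) :
    Real.sin ((a + b) / 2) ^ 2 ≤
      Real.sin (a / 2) ^ 2 + Real.sin (b / 2) ^ 2 + (1 / 2) * Real.sin a := by
  have hdefect := sin_sq_half_add_sin_sq_half_sub_sin_sq_half_add a b
  have hcos : 0 ≤ (1 - cos a) * (1 - cos b) :=
    mul_nonneg (sub_nonneg.2 (cos_le_one a)) (sub_nonneg.2 (cos_le_one b))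
  have hsin : sin a * sin b ≤ sin a :=
    mul_le_of_le_one_right (sin_nonneg_of_nonneg_of_le_pi ha0 haπ) (sin_le_one b)
  linarith

/-- For `a, b ∈ [0, π]`: `sin²((a+b)/2) ≤ sin²(a/2) + sin²(b/2) + (1/2)·sin a`. -/
theorem sin_sq_add_div_two_le
    (a b : ℝ) (ha0 : 0 ≤ a) (haπ : a ≤ Real.pi) (hb0 : 0 ≤ b) (hbπ : b ≤ Real.pi) :
    Real.sin ((a + b) / 2) ^ 2 ≤
      Real.sin (a / 2) ^ 2 + Real.sin (b / 2) ^ 2 + (1 / 2) * Real.sin a :=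
  sin_sq_add_div_two_le_general a b ha0 haπ
end
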